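/- Let N ≥ 2 and let d₀, d₁, …, d_N be positive natural numbers. For i = 0, …, N−1 let W^{(i)} be a real d_{i+1} × d_i matrix, b^{(i)} ∈ ℝ^{d_{i+1}}, and let σ_i : ℝ → ℝ be twice continuously differentiable, applied componentwise. Define, for an input x ∈ ℝ^{d₀}: a^{(−1)} = x, z^{(i)} = W^{(i)} a^{(i−1)} + b^{(i)}, and a^{(i)} = σ_i(z^{(i)}) for i = 0, …, N−1. Define B^{(0)} = W^{(0)} and B^{(i)} = W^{(i)} · diag( σ'_{i−1}(z^{(i−1)}) ) · B^{(i−1)} for i ≥ 1; and for 1 ≤ k ≤ N−1 define F^{(k,k−1)} = W^{(k)} and F^{(k,i)} = W^{(k)} · diag( σ'_{k−1}(z^{(k−1)}) ) · F^{(k−1,i)} for i ≤ k−2. Then for every output index j, the Hessian matrix of the j-th coordinate of x ↦ z^{(N−1)}(x) equals Σ_{i=0}^{N−2} (B^{(i)})ᵀ · diag( F_j^{(N−1,i)} ⊙ σ''_i(z^{(i)}) ) · B^{(i)}, where F_j^{(N−1,i)} denotes the j-th row of F^{(N−1,i)}, ⊙ is the componentwise (Hadamard) product, and σ''_i is applied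 componentwise to z^{(i)}(x). -/

import Mathlib

/-!
By the chain rule, the gradient of `z^{(i)}_j` is the `j`-th row of `B^{(i)}`. Differentiating
`B^{(n+1)}_{jl} = ∑_m W^{(n+1)}_{jm} σ'_n(z^{(n)}_m) B^{(n)}_{ml}` by the product rule produces the
new term `B^{(n)ᵀ} diag(W^{(n+1)}_j ⊙ σ''_n(z^{(n)})) B^{(n)}` plus the earlier Hessians of the
`B^{(n)}_{ml}`, weighted by `W^{(n+1)}_{jm} σ'_n(z^{(n)}_m)`; the recursion for `F` is exactly what
turns these weights into the rows `F^{(n+1,i)}_j`.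
-/

open Matrix

/-- The pre-activation vectors `z^{(i)}` of a feedforward network:
`a^{(-1)} = x`, `z^{(i)} = W^{(i)} a^{(i-1)} + b^{(i)}`, `a^{(i)} = σ_i(z^{(i)})`. -/
noncomputable def netZ (d : ℕ → ℕ)
    (W : ∀ i : ℕ, Matrix (Fin (d (i + 1))) (Fin (d i)) ℝ)
    (b : ∀ i : ℕ, Fin (d (i + 1)) → ℝ)
    (σ : ℕ → ℝ → ℝ) (x : Fin (d 0) → ℝ) : ∀ i : ℕ, Fin (d (i + 1)) → ℝ
  | 0 => W 0 *ᵥ x + b 0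
  | i + 1 => W (i + 1) *ᵥ (fun k => σ i (netZ d W b σ x i k)) + b (i + 1)

/-- The matrices `B^{(i)}`: `B^{(0)} = W^{(0)}` and
`B^{(i)} = W^{(i)} · diag(σ'_{i-1}(z^{(i-1)})) · B^{(i-1)}`. -/
noncomputable def netB (d : ℕ → ℕ)
    (W : ∀ i : ℕ, Matrix (Fin (d (i + 1))) (Fin (d i)) ℝ)
    (b : ∀ i : ℕ, Fin (d (i + 1)) → ℝ)
    (σ : ℕ → ℝ → ℝ) (x : Fin (d 0) → ℝ) :
    ∀ i : ℕ, Matrix (Fin (d (i + 1))) (Fin (d 0)) ℝ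
  | 0 => W 0
  | i + 1 =>
      W (i + 1) * Matrix.diagonal (fun k => deriv (σ i) (netZ d W b σ x i k))
        * netB d W b σ x i


noncomputable def dotProductCLM (𝕜 ι : Type*) [NontriviallyNormedField 𝕜] [CompleteSpace 𝕜]
    [Fintype ι] [DecidableEq ι] : (ι → 𝕜) ≃ₗ[𝕜] ((ι → 𝕜) →L[𝕜] 𝕜) :=
  (dotProductEquiv 𝕜 ι).trans LinearMap.toContinuousLinearMap

section DotProductCLM

variable {𝕜 ι : Type*} [NontriviallyNormedField 𝕜] [CompleteSpace 𝕜] [Fintype ι] [DecidableEq ι]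

@[simp]
lemma dotProductCLM_apply (c v : ι → 𝕜) : dotProductCLM 𝕜 ι c v = c ⬝ᵥ v := rfl

lemma dotProductCLM_apply_single (c : ι → 𝕜) (l : ι) :
    dotProductCLM 𝕜 ι c (Pi.single l 1) = c l := by
  simp

end DotProductCLM

lemma Matrix.mul_diagonal_mul_row {l m n α : Type*} [Fintype m] [DecidableEq m]
    [NonUnitalNonAssocSemiring α] (A : Matrix l m α) (v : m → α) (B : Matrix m n α) (j : l) :
    (A * diagonal v * B) j = ∑ k, (A j k * v k) • B k := by
  rw [mul_apply_eq_vecMul, vecMul_eq_sum]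
  simp only [mul_diagonal]

lemma Matrix.mul_diagonal_mul_apply {l m n α : Type*} [Fintype m] [DecidableEq m]
    [NonUnitalNonAssocSemiring α] (A : Matrix l m α) (v : m → α) (B : Matrix m n α) (j : l)
    (i : n) : (A * diagonal v * B) j i = ∑ k, A j k * v k * B k i := by
  simp [mul_diagonal_mul_row, Finset.sum_apply]

noncomputable def netHessian (d : ℕ → ℕ)
    (W : ∀ i : ℕ, Matrix (Fin (d (i + 1))) (Fin (d i)) ℝ)
    (b : ∀ i : ℕ, Fin (d (i + 1)) → ℝ)
    (σ : ℕ → ℝ → ℝ) (x : Fin (d 0) → ℝ)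
    (F : ∀ k i : ℕ, Matrix (Fin (d (k + 1))) (Fin (d (i + 1))) ℝ)
    (n : ℕ) (j : Fin (d (n + 1))) : Matrix (Fin (d 0)) (Fin (d 0)) ℝ :=
  ∑ p ∈ Finset.range n, (netB d W b σ x p)ᵀ
    * diagonal (fun m => F n p j m * deriv (deriv (σ p)) (netZ d W b σ x p m)) * netB d W b σ x p

section Network

variable {d : ℕ → ℕ} {W : ∀ i : ℕ, Matrix (Fin (d (i + 1))) (Fin (d i)) ℝ}
  {b : ∀ i : ℕ, Fin (d (i + 1)) → ℝ} {σ : ℕ → ℝ → ℝ}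

lemma netB_succ_apply (x : Fin (d 0) → ℝ) (n : ℕ) (j : Fin (d (n + 2))) :
    netB d W b σ x (n + 1) j
      = ∑ m, (W (n + 1) j m * deriv (σ n) (netZ d W b σ x n m)) • netB d W b σ x n m :=
  mul_diagonal_mul_row _ _ _ _

lemma hasFDerivAt_netZ_apply (hσ : ∀ i, Differentiable ℝ (σ i)) (x : Fin (d 0) → ℝ) :
    ∀ (i : ℕ) (j : Fin (d (i + 1))),
      HasFDerivAt (fun y => netZ d W b σ y i j) (dotProductCLM ℝ _ (netB d W b σ x i j)) x
  | 0, j => by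
    have hlin : HasFDerivAt (fun y => W 0 j ⬝ᵥ y) (dotProductCLM ℝ _ (W 0 j)) x :=
      (dotProductCLM ℝ _ (W 0 j)).hasFDerivAt
    exact hlin.add_const (b 0 j)
  | i + 1, j => by
    have hsum : HasFDerivAt (fun y => ∑ m, W (i + 1) j m * σ i (netZ d W b σ y i m))
        (∑ m, W (i + 1) j m • deriv (σ i) (netZ d W b σ x i m)
          • dotProductCLM ℝ _ (netB d W b σ x i m)) x :=
      HasFDerivAt.fun_sum fun m _ =>
        (((hσ i) _).hasDerivAt.comp_hasFDerivAt x (hasFDerivAt_netZ_apply hσ x i m)).const_mul _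
    rw [netB_succ_apply, map_sum]
    simp only [map_smul, mul_smul]
    exact hsum.add_const (b (i + 1) j)

variable (F : ∀ k i : ℕ, Matrix (Fin (d (k + 1))) (Fin (d (i + 1))) ℝ)

lemma netHessian_succ {x : Fin (d 0) → ℝ} (hFbase : ∀ k : ℕ, F (k + 1) k = W (k + 1))
    (hFstep : ∀ k i : ℕ, i < k →
      F (k + 1) i =
        W (k + 1) * diagonal (fun m => deriv (σ k) (netZ d W b σ x k m)) * F k i)
    (n : ℕ) (j : Fin (d (n + 2))) :
    netHessian d W b σ x F (n + 1) j
      = ∑ m, (W (n + 1) j m * deriv (σ n) (netZ d W b σ x n m)) • netHessian d W b σ x F n m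
        + (netB d W b σ x n)ᵀ
          * diagonal (fun m => W (n + 1) j m * deriv (deriv (σ n)) (netZ d W b σ x n m))
          * netB d W b σ x n := by
  rw [netHessian, Finset.sum_range_succ, hFbase]
  congr 1
  simp only [netHessian, Finset.smul_sum]
  rw [Finset.sum_comm]
  refine Finset.sum_congr rfl fun p hp => ?_
  ext k l
  rw [hFstep n p (Finset.mem_range.mp hp)]
  simp only [Matrix.sum_apply, Matrix.smul_apply, smul_eq_mul, mul_diagonal_mul_apply,
    Finset.mul_sum, Finset.sum_mul]
  rw [Finset.sum_comm]
  exact Finset.sum_congr rfl fun m _ => Finset.sum_congr rfl fun m' _ => by ring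

lemma hasFDerivAt_netB_apply (hσ : ∀ i, Differentiable ℝ (σ i))
    (hσ' : ∀ i, Differentiable ℝ (deriv (σ i))) {x : Fin (d 0) → ℝ}
    (hFbase : ∀ k : ℕ, F (k + 1) k = W (k + 1))
    (hFstep : ∀ k i : ℕ, i < k →
      F (k + 1) i =
        W (k + 1) * diagonal (fun m => deriv (σ k) (netZ d W b σ x k m)) * F k i) :
    ∀ (n : ℕ) (j : Fin (d (n + 1))) (l : Fin (d 0)),
      HasFDerivAt (fun y => netB d W b σ y n j l)
        (dotProductCLM ℝ _ (fun k => netHessian d W b σ x F n j k l)) x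
  | 0, j, l => by
    have hzero : (fun k => netHessian d W b σ x F 0 j k l) = 0 := by
      funext k
      simp [netHessian]
    rw [hzero, map_zero]
    exact hasFDerivAt_const (W 0 j l) x
  | n + 1, j, l => by
    have hprod : HasFDerivAt
        (fun y => ∑ m, (W (n + 1) j m * deriv (σ n) (netZ d W b σ y n m)) * netB d W b σ y n m l)
        (∑ m, ((W (n + 1) j m * deriv (σ n) (netZ d W b σ x n m))
            • dotProductCLM ℝ _ (fun k => netHessian d W b σ x F n m k l)
          + netB d W b σ x n m l • W (n + 1) j m • deriv (deriv (σ n)) (netZ d W b σ x n m)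
            • dotProductCLM ℝ _ (netB d W b σ x n m))) x :=
      HasFDerivAt.fun_sum fun m _ =>
        ((((hσ' n) _).hasDerivAt.comp_hasFDerivAt x (hasFDerivAt_netZ_apply hσ x n m)).const_mul
          _).mul (hasFDerivAt_netB_apply hσ hσ' hFbase hFstep n m l)
    have hcol : (fun k => netHessian d W b σ x F (n + 1) j k l)
        = ∑ m, ((W (n + 1) j m * deriv (σ n) (netZ d W b σ x n m))
            • (fun k => netHessian d W b σ x F n m k l)
          + (netB d W b σ x n m l * (W (n + 1) j m * deriv (deriv (σ n)) (netZ d W b σ x n m)))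
            • netB d W b σ x n m) := by
      funext k
      simp only [netHessian_succ F hFbase hFstep, Matrix.add_apply, Matrix.sum_apply,
        Matrix.smul_apply, mul_diagonal_mul_apply, Finset.sum_apply, Pi.add_apply,
        Pi.smul_apply, smul_eq_mul, Finset.sum_add_distrib, transpose_apply]
      exact congrArg _ (Finset.sum_congr rfl fun m _ => by ring)
    have hfun : (fun y => netB d W b σ y (n + 1) j l)
        = fun y => ∑ m, (W (n + 1) j m * deriv (σ n) (netZ d W b σ y n m)) * netB d W b σ y n m l :=
      funext fun y => by simp [netB_succ_apply, Finset.sum_apply]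
    rw [hfun, hcol, map_sum]
    simpa only [map_add, map_smul, mul_smul] using hprod

end Network

theorem network_hessian_general (M : ℕ) (d : ℕ → ℕ)
    (W : ∀ i : ℕ, Matrix (Fin (d (i + 1))) (Fin (d i)) ℝ)
    (b : ∀ i : ℕ, Fin (d (i + 1)) → ℝ)
    (σ : ℕ → ℝ → ℝ) (hσ : ∀ i, ContDiff ℝ 2 (σ i))
    (x : Fin (d 0) → ℝ)
    (F : ∀ k i : ℕ, Matrix (Fin (d (k + 1))) (Fin (d (i + 1))) ℝ)
    (hFbase : ∀ k : ℕ, F (k + 1) k = W (k + 1))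
    (hFstep : ∀ k i : ℕ, i < k →
      F (k + 1) i =
        W (k + 1) * Matrix.diagonal (fun m => deriv (σ k) (netZ d W b σ x k m)) * F k i) :
    ∀ (j : Fin (d (M + 2))) (k l : Fin (d 0)),
      fderiv ℝ (fun y => fderiv ℝ (fun y' => netZ d W b σ y' (M + 1) j) y (Pi.single l 1))
          x (Pi.single k 1)
        = (∑ i ∈ Finset.range (M + 1),
            (netB d W b σ x i)ᵀ
              * Matrix.diagonal
                  (fun m => F (M + 1) i j m * deriv (deriv (σ i)) (netZ d W b σ x i m))
              * netB d W b σ x i) k l := by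
  intro j k l
  have hσ₁ : ∀ i, Differentiable ℝ (σ i) := fun i => (hσ i).differentiable two_ne_zero
  have hσ₂ : ∀ i, Differentiable ℝ (deriv (σ i)) := fun i => (hσ i).differentiable_deriv_two
  have hgrad : (fun y => fderiv ℝ (fun y' => netZ d W b σ y' (M + 1) j) y (Pi.single l 1))
      = fun y => netB d W b σ y (M + 1) j l := by
    funext y
    rw [(hasFDerivAt_netZ_apply hσ₁ y (M + 1) j).fderiv, dotProductCLM_apply_single]
  rw [hgrad, (hasFDerivAt_netB_apply F hσ₁ hσ₂ hFbase hFstep (M + 1) j l).fderiv,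
    dotProductCLM_apply_single]
  rfl

/-- Hessian of a feedforward neural network with `C²` activations
(with `N = M + 2 ≥ 2` layers), Lemma 1 of Singla–Feizi: for every output
coordinate `j`, the Hessian of `x ↦ z^{(N-1)}_j(x)` equals
`∑_{i=0}^{N-2} (B^{(i)})ᵀ · diag(F_j^{(N-1,i)} ⊙ σ''_i(z^{(i)})) · B^{(i)}`,
where the matrices `F^{(k,i)}` satisfy `F^{(k,k-1)} = W^{(k)}` and
`F^{(k,i)} = W^{(k)} · diag(σ'_{k-1}(z^{(k-1)})) · F^{(k-1,i)}` for `i ≤ k-2`. -/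
theorem network_hessian (M : ℕ) (d : ℕ → ℕ) (hd : ∀ i, 0 < d i)
    (W : ∀ i : ℕ, Matrix (Fin (d (i + 1))) (Fin (d i)) ℝ)
    (b : ∀ i : ℕ, Fin (d (i + 1)) → ℝ)
    (σ : ℕ → ℝ → ℝ) (hσ : ∀ i, ContDiff ℝ 2 (σ i))
    (x : Fin (d 0) → ℝ)
    (F : ∀ k i : ℕ, Matrix (Fin (d (k + 1))) (Fin (d (i + 1))) ℝ)
    (hFbase : ∀ k : ℕ, F (k + 1) k = W (k + 1))
    (hFstep : ∀ k i : ℕ, i < k →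
      F (k + 1) i =
        W (k + 1) * Matrix.diagonal (fun m => deriv (σ k) (netZ d W b σ x k m)) * F k i) :
    ∀ (j : Fin (d (M + 2))) (k l : Fin (d 0)),
      fderiv ℝ (fun y => fderiv ℝ (fun y' => netZ d W b σ y' (M + 1) j) y (Pi.single l 1))
          x (Pi.single k 1)
        = (∑ i ∈ Finset.range (M + 1),
            (netB d W b σ x i)ᵀ
              * Matrix.diagonal
                  (fun m => F (M + 1) i j m * deriv (deriv (σ i)) (netZ d W b σ x i m))
              * netB d W b σ x i) k l :=
  network_hessian_general M d W b σ hσ x F hFbase hFstep
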